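/- arXiv:1401.1688 — 6 statements merged into one kernel-verified Lean document; each statement's English description precedes it below -/
import Mathlib

section
/- Let a > 0 and n ≥ 2, and let α₀ be the unique positive real root of 1 - x^n - a x. Then every complex root α of x^n - a x - 1 satisfies |α| ≥ α₀. -/
/-! If `|α| < α₀`, the triangle inequality applied to `1 = α ^ n - a α` gives
`1 ≤ |α| ^ n + a |α| < α₀ ^ n + a α₀ = 1`, since `r ↦ r ^ n + a r` is strictly increasing on
`[0, ∞)`. -/

theorem one_le_norm_pow_add_norm_mul_norm {R : Type*} [SeminormedRing R] [NormOneClass R]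
    {α c : R} {n : ℕ} (h : α ^ n - c * α = 1) : 1 ≤ ‖α‖ ^ n + ‖c‖ * ‖α‖ :=
  calc (1 : ℝ) = ‖α ^ n - c * α‖ := by rw [h, norm_one]
    _ ≤ ‖α ^ n‖ + ‖c * α‖ := norm_sub_le _ _
    _ ≤ ‖α‖ ^ n + ‖c‖ * ‖α‖ := add_le_add (norm_pow_le α n) (norm_mul_le c α)

theorem pow_add_mul_lt_pow_add_mul {a r s : ℝ} (ha : 0 < a) (hr : 0 ≤ r) (hrs : r < s) (n : ℕ) :
    r ^ n + a * r < s ^ n + a * s :=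
  add_lt_add_of_le_of_lt (pow_le_pow_left₀ hr hrs.le n) (mul_lt_mul_of_pos_left hrs ha)

theorem roots_outside_small_disk_general (a : ℝ) (ha : 0 < a) (n : ℕ)
    (α₀ : ℝ) (hα₀root : 1 - α₀ ^ n - a * α₀ = 0) :
    ∀ α : ℂ, α ^ n - (a : ℂ) * α - 1 = 0 → α₀ ≤ ‖α‖ := by
  intro α hα
  have hnorm : 1 ≤ ‖α‖ ^ n + ‖(a : ℂ)‖ * ‖α‖ :=
    one_le_norm_pow_add_norm_mul_norm (by linear_combination hα)
  rw [Complex.norm_real, Real.norm_of_nonneg ha.le] at hnorm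
  by_contra! hlt
  have := pow_add_mul_lt_pow_add_mul ha (norm_nonneg α) hlt n
  linarith

theorem roots_outside_small_disk (a : ℝ) (ha : 0 < a) (n : ℕ) (hn : 2 ≤ n)
    (α₀ : ℝ) (hα₀pos : 0 < α₀) (hα₀root : 1 - α₀ ^ n - a * α₀ = 0) :
    ∀ α : ℂ, α ^ n - (a : ℂ) * α - 1 = 0 → α₀ ≤ ‖α‖ :=
  roots_outside_small_disk_general a ha n α₀ hα₀root
end

section
/- Let a ∈ (1,2] and suppose the polynomial a x - x^n - 1 has two distinct real roots γ₁ < γ₂ in (0,1]. Then for any γ with γ₁ < γ < γ₂, the trinomial x^n - a x - 1 has exactly one complex root (counted with multiplicity) in the open disk |x| < γ. -/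
open scoped Classical

open Polynomial Finset Set

/-!
On `[0, ∞)` the map `x ↦ x ^ n` is strictly convex and its secant slope over `[γ₁, γ₂]` is `a`.
Hence `r ^ n < a r - 1` for `γ₁ < r < γ₂`, which against `|z| ^ n = |a z + 1| ≥ a |z| - 1` shows
that every root of modulus `< γ` has modulus `≤ γ₁`; moreover the derivative `n γ₁ ^ (n - 1)` at
`γ₁` is `< a`. The intermediate value theorem gives a real root `x₀ ∈ [-γ₁, 0]`. Dividing out
`X - x₀` leaves `∑ X ^ i x₀ ^ (n - 1 - i) - a`, and on the closed disk of radius `γ₁` the geometric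
sum has modulus at most `n γ₁ ^ (n - 1) < a`, so no further root lies there.
-/

section RealTrinomial

variable {a x y : ℝ} {n : ℕ}

lemma slope_pow_eq_of_roots (hxy : x < y) (hx : a * x - x ^ n - 1 = 0)
    (hy : a * y - y ^ n - 1 = 0) : slope (· ^ n) x y = a := by
  rw [slope_def_field, div_eq_iff (sub_ne_zero.mpr hxy.ne')]
  linarith

lemma natCast_mul_pow_pred_lt_slope_pow (hn : 2 ≤ n) (hx : 0 ≤ x) (hxy : x < y) :
    n * x ^ (n - 1) < slope (· ^ n) x y :=
  (strictConvexOn_pow hn).lt_slope_of_hasDerivAt hx (hx.trans hxy.le) hxy (hasDerivAt_pow n x)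

lemma pow_lt_mul_sub_one_of_mem_Ioo (hn : 2 ≤ n) (hx : 0 ≤ x) (hx₀ : a * x - x ^ n - 1 = 0)
    (hslope : slope (· ^ n) x y = a) {r : ℝ} (hr : r ∈ Ioo x y) : r ^ n < a * r - 1 := by
  have hsec := (strictConvexOn_pow hn).secant_strict_mono (a := x) hx
    (hx.trans hr.1.le) (hx.trans (hr.1.trans hr.2).le) hr.1.ne' (hr.1.trans hr.2).ne' hr.2
  rw [slope_def_field] at hslope
  rw [hslope, div_lt_iff₀ (sub_pos.mpr hr.1)] at hsec
  linarith

lemma exists_root_mem_Icc_neg (hx : 0 ≤ x) (hxa : x ^ n ≤ a * x - 1) :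
    ∃ t ∈ Icc (-x) 0, t ^ n - a * t - 1 = 0 := by
  have hneg : -x ^ n ≤ (-x) ^ n := by
    simpa only [abs_pow, abs_neg, abs_of_nonneg hx] using neg_abs_le ((-x) ^ n)
  have hzero : (0 : ℝ) ^ n ≤ 1 := pow_le_one₀ le_rfl zero_le_one
  exact intermediate_value_Icc' (neg_nonpos.mpr hx) (by fun_prop)
    ⟨by linarith, by linarith⟩

end RealTrinomial

section Trinomial

variable {n : ℕ}

lemma X_pow_sub_C_mul_X_sub_one_eq_mul {R : Type*} [CommRing R] {a z : R}
    (hz : z ^ n = a * z + 1) :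
    (X ^ n - C a * X - 1 : R[X]) =
      (X - C z) * (∑ i ∈ range n, X ^ i * C z ^ (n - 1 - i) - C a) := by
  have hgeom := geom_sum₂_mul (X : R[X]) (C z) n
  have hCz : C z ^ n = C a * C z + 1 := by rw [← C_pow, hz, C_add, C_mul, C_1]
  linear_combination hCz - hgeom

lemma pow_eq_of_mem_roots_X_pow_sub_C_mul_X_sub_one {R : Type*} [CommRing R] [IsDomain R]
    {a z : R} (hz : z ∈ (X ^ n - C a * X - 1 : R[X]).roots) : z ^ n = a * z + 1 := by
  have hroot := (mem_roots'.mp hz).2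
  simp only [IsRoot, eval_sub, eval_pow, eval_mul, eval_C, eval_X, eval_one] at hroot
  linear_combination hroot

variable {𝕜 : Type*} [NormedField 𝕜]

lemma norm_mul_sub_one_le_norm_pow {a z : 𝕜} (hz : z ^ n = a * z + 1) :
    ‖a‖ * ‖z‖ - 1 ≤ ‖z‖ ^ n := by
  have h := norm_sub_le (a * z + 1) 1
  rw [add_sub_cancel_right, ← hz, norm_mul, norm_pow, norm_one] at h
  linarith

lemma norm_geom_sum₂_le {z w : 𝕜} {ρ : ℝ} (hz : ‖z‖ ≤ ρ) (hw : ‖w‖ ≤ ρ) :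
    ‖∑ i ∈ range n, z ^ i * w ^ (n - 1 - i)‖ ≤ n * ρ ^ (n - 1) := by
  have hρ : 0 ≤ ρ := (norm_nonneg z).trans hz
  calc ‖∑ i ∈ range n, z ^ i * w ^ (n - 1 - i)‖
      ≤ ∑ i ∈ range n, ‖z‖ ^ i * ‖w‖ ^ (n - 1 - i) := by
        simpa only [norm_mul, norm_pow] using
          norm_sum_le (range n) fun i => z ^ i * w ^ (n - 1 - i)
    _ ≤ ∑ i ∈ range n, ρ ^ i * ρ ^ (n - 1 - i) := by gcongr
    _ = ∑ i ∈ range n, ρ ^ (n - 1) := by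
        refine sum_congr rfl fun i hi => ?_
        rw [← pow_add, Nat.add_sub_cancel' (Nat.le_sub_one_of_lt (mem_range.mp hi))]
    _ = n * ρ ^ (n - 1) := by simp

lemma roots_filter_norm_le_eq_singleton {a z₀ : 𝕜} {ρ : ℝ} (hz₀ : z₀ ^ n = a * z₀ + 1)
    (hz₀ρ : ‖z₀‖ ≤ ρ) (hρ : n * ρ ^ (n - 1) < ‖a‖) :
    (X ^ n - C a * X - 1 : 𝕜[X]).roots.filter (fun z => ‖z‖ ≤ ρ) = {z₀} := by
  set q : 𝕜[X] := ∑ i ∈ range n, X ^ i * C z₀ ^ (n - 1 - i) - C a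
  have hq : ∀ w : 𝕜, ‖w‖ ≤ ρ → q.eval w ≠ 0 := by
    intro w hw hqw
    simp only [q, eval_sub, eval_finsetSum, eval_mul, eval_pow, eval_X, eval_C,
      sub_eq_zero] at hqw
    have := norm_geom_sum₂_le (n := n) hw hz₀ρ
    rw [hqw] at this
    linarith
  have hq₀ : q ≠ 0 := fun h => hq z₀ hz₀ρ (by rw [h, eval_zero])
  rw [X_pow_sub_C_mul_X_sub_one_eq_mul hz₀, roots_mul (mul_ne_zero (X_sub_C_ne_zero z₀) hq₀),
    roots_X_sub_C, Multiset.filter_add, Multiset.filter_singleton, if_pos hz₀ρ,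
    Multiset.filter_eq_nil.mpr fun w hw hwρ => hq w hwρ ((mem_roots hq₀).mp hw), add_zero]

end Trinomial

theorem one_root_in_disk_general (a : ℝ) (n : ℕ) (hn : 2 ≤ n)
    (γ₁ γ₂ : ℝ) (h12 : γ₁ < γ₂) (h1 : γ₁ ∈ Set.Ioc (0 : ℝ) 1)
    (hroot1 : a * γ₁ - γ₁ ^ n - 1 = 0) (hroot2 : a * γ₂ - γ₂ ^ n - 1 = 0)
    (γ : ℝ) (hγ : γ₁ < γ) (hγ' : γ < γ₂) :
    (((Polynomial.X ^ n - Polynomial.C (a : ℂ) * Polynomial.X - 1).roots.filter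
      (fun z => ‖z‖ < γ)).card) = 1 := by
  have hslope := slope_pow_eq_of_roots h12 hroot1 hroot2
  have hderiv : n * γ₁ ^ (n - 1) < a :=
    hslope ▸ natCast_mul_pow_pred_lt_slope_pow hn h1.1.le h12
  have hnorm_a : ‖(a : ℂ)‖ = a := by
    rw [Complex.norm_real, Real.norm_of_nonneg (by nlinarith [pow_pos h1.1 (n - 1)])]
  have hdisk :
      ∀ z ∈ (X ^ n - C (a : ℂ) * X - 1).roots, ‖z‖ < γ ↔ ‖z‖ ≤ γ₁ := by
    refine fun z hz => ⟨fun hzγ => ?_, fun hz₁ => hz₁.trans_lt hγ⟩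
    by_contra! hz₁
    have hlower := norm_mul_sub_one_le_norm_pow (pow_eq_of_mem_roots_X_pow_sub_C_mul_X_sub_one hz)
    have hupper :=
      pow_lt_mul_sub_one_of_mem_Ioo hn h1.1.le hroot1 hslope ⟨hz₁, hzγ.trans hγ'⟩
    rw [hnorm_a] at hlower
    linarith
  obtain ⟨x₀, hx₀, hroot₀⟩ :=
    exists_root_mem_Icc_neg h1.1.le (by linarith : γ₁ ^ n ≤ a * γ₁ - 1)
  have hz₀ : (x₀ : ℂ) ^ n = a * x₀ + 1 := by
    exact_mod_cast (by linarith : x₀ ^ n = a * x₀ + 1)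
  have hz₀γ₁ : ‖(x₀ : ℂ)‖ ≤ γ₁ := by
    rw [Complex.norm_real, Real.norm_eq_abs, abs_le]
    exact ⟨hx₀.1, hx₀.2.trans h1.1.le⟩
  rw [Multiset.filter_congr hdisk,
    roots_filter_norm_le_eq_singleton hz₀ hz₀γ₁ (by rwa [hnorm_a]), Multiset.card_singleton]

theorem one_root_in_disk (a : ℝ) (ha : a ∈ Set.Ioc (1 : ℝ) 2) (n : ℕ) (hn : 2 ≤ n)
    (γ₁ γ₂ : ℝ) (h12 : γ₁ < γ₂) (h1 : γ₁ ∈ Set.Ioc (0 : ℝ) 1) (h2 : γ₂ ∈ Set.Ioc (0 : ℝ) 1)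
    (hroot1 : a * γ₁ - γ₁ ^ n - 1 = 0) (hroot2 : a * γ₂ - γ₂ ^ n - 1 = 0)
    (γ : ℝ) (hγ : γ₁ < γ) (hγ' : γ < γ₂) :
    (((Polynomial.X ^ n - Polynomial.C (a : ℂ) * Polynomial.X - 1).roots.filter
      (fun z => ‖z‖ < γ)).card) = 1 :=
  one_root_in_disk_general a n hn γ₁ γ₂ h12 h1 hroot1 hroot2 γ hγ hγ'
end

section
/- Let a ∈ (1,2] be real. Then for all sufficiently large n, the polynomial P₂(x) = a x - x^n - 1 has exactly two real roots in the interval (0,1]. -/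
/-! For `n ≥ 2` the map `x ↦ a x - x^n - 1` is strictly concave on `[0, ∞)`, so it has at most
two zeros there. Fix `1/a < x₀ < 1`; as `n → ∞`, `P₂(x₀) → a x₀ - 1 > 0`, while `P₂(0) = -1 < 0`
and `P₂(1) = a - 2 ≤ 0`, so the intermediate value theorem gives a zero on each side of `x₀`. -/

open Set Filter

theorem StrictConcaveOn.eq_or_eq_of_map_eq {𝕜 β : Type*} [Field 𝕜] [LinearOrder 𝕜]
    [IsStrictOrderedRing 𝕜] [AddCommMonoid β] [LinearOrder β] [IsOrderedAddMonoid β]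
    [Module 𝕜 β] [PosSMulStrictMono 𝕜 β] {s : Set 𝕜} {f : 𝕜 → β} (hf : StrictConcaveOn 𝕜 s f)
    {p r x : 𝕜} {c : β} (hp : p ∈ s) (hr : r ∈ s) (hx : x ∈ s) (hpr : p < r)
    (hfp : f p = c) (hfr : f r = c) (hfx : f x = c) : x = p ∨ x = r := by
  have between {u v w : 𝕜} (hu : u ∈ s) (hw : w ∈ s) (huv : u < v) (hvw : v < w)
      (hfu : f u = c) (hfv : f v = c) (hfw : f w = c) : False := by
    have hv : v ∈ openSegment 𝕜 u w := by
      rw [openSegment_eq_Ioo (huv.trans hvw)]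
      exact ⟨huv, hvw⟩
    have := hf.lt_on_openSegment hu hw (huv.trans hvw).ne hv
    simp [hfu, hfv, hfw] at this
  by_contra! hne
  rcases lt_or_gt_of_ne hne.1 with hxp | hpx
  · exact between hx hr hxp hpr hfx hfp hfr
  rcases lt_or_gt_of_ne hne.2 with hxr | hrx
  · exact between hp hr hpx hxr hfp hfx hfr
  · exact between hp hx hpr hrx hfp hfr hfx

def P₂ (a : ℝ) (n : ℕ) (x : ℝ) : ℝ := a * x - x ^ n - 1

@[simp]
theorem P₂_zero (a : ℝ) {n : ℕ} (hn : n ≠ 0) : P₂ a n 0 = -1 := by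
  simp [P₂, hn]

@[simp]
theorem P₂_one (a : ℝ) (n : ℕ) : P₂ a n 1 = a - 2 := by
  simp only [P₂, one_pow]; ring

theorem continuous_P₂ (a : ℝ) (n : ℕ) : Continuous (P₂ a n) := by
  unfold P₂; fun_prop

theorem strictConcaveOn_P₂ (a : ℝ) {n : ℕ} (hn : 2 ≤ n) : StrictConcaveOn ℝ (Ici 0) (P₂ a n) := by
  have := ((LinearMap.mul ℝ ℝ a).concaveOn (convex_Ici 0)).sub_strictConvexOn
    (strictConvexOn_pow hn)
  have h : P₂ a n = fun x => (a * x - x ^ n) + -1 := by ext x; simp only [P₂]; ring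
  rw [h]
  exact this.add_const (-1)

theorem exists_eventually_P₂_pos {a : ℝ} (ha : 1 < a) :
    ∃ x₀ ∈ Ioo (0 : ℝ) 1, ∀ᶠ n in atTop, 0 < P₂ a n x₀ := by
  obtain ⟨x₀, hax₀, hx₀⟩ := exists_between (inv_lt_one_of_one_lt₀ ha)
  have hx₀pos : 0 < x₀ := (inv_pos.2 (zero_lt_one.trans ha)).trans hax₀
  refine ⟨x₀, ⟨hx₀pos, hx₀⟩, ?_⟩
  have hlim : Tendsto (fun n => P₂ a n x₀) atTop (nhds (a * x₀ - 0 - 1)) :=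
    ((tendsto_pow_atTop_nhds_zero_of_lt_one hx₀pos.le hx₀).const_sub _).sub_const 1
  refine hlim.eventually_const_lt ?_
  have := (inv_lt_iff_one_lt_mul₀ (zero_lt_one.trans ha)).1 hax₀
  linarith

theorem two_real_roots_eventually (a : ℝ) (ha : a ∈ Set.Ioc (1 : ℝ) 2) :
    ∃ n₀ : ℕ, ∀ n : ℕ, n₀ < n →
      ∃ γ₁ γ₂ : ℝ, γ₁ ≠ γ₂ ∧
        {x : ℝ | x ∈ Set.Ioc (0 : ℝ) 1 ∧ a * x - x ^ n - 1 = 0} = {γ₁, γ₂} := by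
  obtain ⟨x₀, ⟨hx₀0, hx₀1⟩, hpos⟩ := exists_eventually_P₂_pos ha.1
  obtain ⟨n₀, hn₀⟩ := eventually_atTop.1 (hpos.and (eventually_ge_atTop 2))
  refine ⟨n₀, fun n hn => ?_⟩
  obtain ⟨hPx₀, hn2⟩ := hn₀ n hn.le
  have hP (s : Set ℝ) : ContinuousOn (P₂ a n) s := (continuous_P₂ a n).continuousOn
  obtain ⟨γ₁, ⟨hγ₁0, hγ₁x₀⟩, hγ₁⟩ := intermediate_value_Ioo hx₀0.le (hP _)
    (show (0 : ℝ) ∈ Ioo (P₂ a n 0) (P₂ a n x₀) from ⟨by rw [P₂_zero a (by omega)]; norm_num, hPx₀⟩)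
  obtain ⟨γ₂, ⟨hx₀γ₂, hγ₂1⟩, hγ₂⟩ := intermediate_value_Ioc' hx₀1.le (hP _)
    (show (0 : ℝ) ∈ Ico (P₂ a n 1) (P₂ a n x₀) by simp [hPx₀, ha.2])
  refine ⟨γ₁, γ₂, (hγ₁x₀.trans hx₀γ₂).ne, Set.ext fun x => ⟨fun ⟨hx, hPx⟩ => ?_, ?_⟩⟩
  · exact (strictConcaveOn_P₂ a hn2).eq_or_eq_of_map_eq hγ₁0.le (hx₀0.trans hx₀γ₂).le hx.1.le
      (hγ₁x₀.trans hx₀γ₂) hγ₁ hγ₂ hPx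
  · rintro (rfl | rfl)
    exacts [⟨⟨hγ₁0, hγ₁x₀.le.trans hx₀1.le⟩, hγ₁⟩, ⟨⟨hx₀0.trans hx₀γ₂, hγ₂1⟩, hγ₂⟩]
end

section
/- Fix a ∈ (0,1]. For every ε > 0 there exists n₀ such that for all n > n₀, every complex root α of x^n - a x - 1 satisfies 1 - ε < |α| < 1 + ε. -/
/-!
A root `α` of `x ^ n - a x - 1` satisfies `|‖α‖ ^ n - 1| ≤ ‖α ^ n - 1‖ = ‖a α‖ ≤ ‖α‖`;
write `r = ‖α‖`. If `r ≥ 1 + ε`, Bernoulli's inequality gives `1 + n (r - 1) ≤ r ^ n ≤ r + 1`,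
so `(n - 1) ε ≤ 1`, impossible for large `n`. If `r ≤ 1 - ε`, then `ε ≤ 1 - r ≤ r ^ n ≤ (1 - ε) ^ n`,
impossible for large `n` as well.
-/

open Filter

theorem abs_norm_pow_sub_one_le_norm {𝕜 : Type*} [NormedField 𝕜] {c z : 𝕜} {n : ℕ}
    (hc : ‖c‖ ≤ 1) (h : z ^ n = c * z + 1) : |‖z‖ ^ n - 1| ≤ ‖z‖ :=
  calc |‖z‖ ^ n - 1| = |‖z ^ n‖ - ‖(1 : 𝕜)‖| := by rw [norm_pow, norm_one]
    _ ≤ ‖z ^ n - 1‖ := abs_norm_sub_norm_le _ _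
    _ = ‖c‖ * ‖z‖ := by rw [h, add_sub_cancel_right, norm_mul]
    _ ≤ ‖z‖ := mul_le_of_le_one_left (norm_nonneg z) hc

theorem eventually_lt_one_add_of_abs_pow_sub_one_le {ε : ℝ} (hε : 0 < ε) :
    ∀ᶠ n : ℕ in atTop, ∀ r : ℝ, |r ^ n - 1| ≤ r → r < 1 + ε := by
  filter_upwards [tendsto_natCast_atTop_atTop.eventually_gt_atTop ((1 + ε) / ε)] with n hn r hr
  rw [div_lt_iff₀ hε] at hn
  by_contra! hrε
  have bernoulli : 1 + n * (r - 1) ≤ r ^ n := by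
    simpa using one_add_mul_le_pow (show (-2 : ℝ) ≤ r - 1 by linarith) n
  have hpow : r ^ n - 1 ≤ r := (le_abs_self _).trans hr
  nlinarith

theorem eventually_one_sub_lt_of_abs_pow_sub_one_le {ε : ℝ} (hε : 0 < ε) :
    ∀ᶠ n : ℕ in atTop, ∀ r : ℝ, |r ^ n - 1| ≤ r → 1 - ε < r := by
  rcases lt_or_ge 1 ε with hε1 | hε1
  · exact Eventually.of_forall fun n r hr => by linarith [(abs_nonneg _).trans hr]
  have hsmall : ∀ᶠ n : ℕ in atTop, (1 - ε) ^ n < ε :=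
    (tendsto_pow_atTop_nhds_zero_of_lt_one (by linarith) (by linarith)).eventually
      (gt_mem_nhds hε)
  filter_upwards [hsmall] with n hn r hr
  by_contra! hrε
  have hr0 : 0 ≤ r := (abs_nonneg _).trans hr
  have hpow : 1 - r ≤ r ^ n := by linarith [neg_abs_le (r ^ n - 1)]
  linarith [pow_le_pow_left₀ hr0 hrε n]

theorem root_moduli_close_to_one (a : ℝ) (ha : a ∈ Set.Ioc (0 : ℝ) 1) :
    ∀ ε > (0 : ℝ), ∃ n₀ : ℕ, ∀ n : ℕ, n₀ < n →
      ∀ α : ℂ, α ^ n - (a : ℂ) * α - 1 = 0 →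
        1 - ε < ‖α‖ ∧ ‖α‖ < 1 + ε := by
  intro ε hε
  obtain ⟨n₀, hn₀⟩ := eventually_atTop.mp
    ((eventually_one_sub_lt_of_abs_pow_sub_one_le hε).and
      (eventually_lt_one_add_of_abs_pow_sub_one_le hε))
  refine ⟨n₀, fun n hn α hα => ?_⟩
  have ha_norm : ‖(a : ℂ)‖ ≤ 1 := by simpa [abs_of_pos ha.1] using ha.2
  have hα_norm : |‖α‖ ^ n - 1| ≤ ‖α‖ :=
    abs_norm_pow_sub_one_le_norm ha_norm (by linear_combination hα)
  exact ⟨(hn₀ n hn.le).1 _ hα_norm, (hn₀ n hn.le).2 _ hα_norm⟩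
end

section
/- Fix a ∈ (1,2]. For every ε > 0 there exists n₀ such that for all n > n₀, every complex root α of x^n - a x - 1 satisfies either |α + 1/a| < ε or 1 - ε < |α| < 1 + ε. -/
/-!
A root satisfies `‖α‖ ^ n = ‖c α + 1‖`. If `‖α‖ ≤ r < 1`, then `‖α + 1 / c‖ = ‖α‖ ^ n / ‖c‖ ≤ r ^ n / ‖c‖`,
which is small for large `n`. If `‖α‖ ≥ 1`, the triangle inequality gives `‖α‖ ^ (n - 1) ≤ ‖c‖ + 1`,
so `‖α‖` cannot stay above any fixed `R > 1` as `n` grows.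
-/

open Filter

namespace PowEqMulAddOne

variable {𝕜 : Type*} [NormedField 𝕜] {c α : 𝕜} {n : ℕ}

theorem norm_add_one_div_eq (hc : c ≠ 0) (h : α ^ n = c * α + 1) :
    ‖α + 1 / c‖ = ‖α‖ ^ n / ‖c‖ := by
  rw [← norm_pow, h, ← norm_div]
  congr 1
  field_simp

theorem norm_pow_pred_le (hα : 1 ≤ ‖α‖) (h : α ^ n = c * α + 1) :
    ‖α‖ ^ (n - 1) ≤ ‖c‖ + 1 := by
  rcases Nat.eq_zero_or_pos n with rfl | hn
  · simp
  have hpow : ‖α‖ ^ (n - 1) * ‖α‖ ≤ (‖c‖ + 1) * ‖α‖ :=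
    calc ‖α‖ ^ (n - 1) * ‖α‖ = ‖c * α + 1‖ := by
          rw [← pow_succ, Nat.sub_add_cancel hn, ← norm_pow, h]
      _ ≤ ‖c‖ * ‖α‖ + 1 := by simpa only [norm_mul, norm_one] using norm_add_le (c * α) 1
      _ ≤ (‖c‖ + 1) * ‖α‖ := by linarith
  exact le_of_mul_le_mul_right hpow (by linarith)

theorem eventually_norm_add_one_div_lt (hc : c ≠ 0) {r ε : ℝ} (hr₀ : 0 ≤ r) (hr₁ : r < 1)
    (hε : 0 < ε) :
    ∀ᶠ n in atTop, ∀ α : 𝕜, α ^ n = c * α + 1 → ‖α‖ ≤ r → ‖α + 1 / c‖ < ε := by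
  have hlim : Tendsto (fun n : ℕ => r ^ n / ‖c‖) atTop (nhds 0) := by
    simpa using (tendsto_pow_atTop_nhds_zero_of_lt_one hr₀ hr₁).div_const ‖c‖
  filter_upwards [hlim.eventually_lt_const hε] with n hn α h hα
  rw [norm_add_one_div_eq hc h]
  exact lt_of_le_of_lt (by gcongr) hn

theorem eventually_norm_lt (c : 𝕜) {R : ℝ} (hR : 1 < R) :
    ∀ᶠ n in atTop, ∀ α : 𝕜, α ^ n = c * α + 1 → ‖α‖ < R := by
  have hlim : Tendsto (fun n : ℕ => R ^ (n - 1)) atTop atTop :=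
    (tendsto_pow_atTop_atTop_of_one_lt hR).comp (tendsto_sub_atTop_nat 1)
  filter_upwards [hlim.eventually_gt_atTop (‖c‖ + 1)] with n hn α h
  by_contra! hα
  have : R ^ (n - 1) ≤ ‖α‖ ^ (n - 1) := by gcongr
  linarith [norm_pow_pred_le (hR.le.trans hα) h]

end PowEqMulAddOne

open PowEqMulAddOne in
theorem root_moduli_dichotomy (a : ℝ) (ha : a ∈ Set.Ioc (1 : ℝ) 2) :
    ∀ ε > (0 : ℝ), ∃ n₀ : ℕ, ∀ n : ℕ, n₀ < n →
      ∀ α : ℂ, α ^ n - (a : ℂ) * α - 1 = 0 →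
        ‖α + 1 / (a : ℂ)‖ < ε ∨
          (1 - ε < ‖α‖ ∧ ‖α‖ < 1 + ε) := by
  intro ε hε
  set δ := min ε (1 / 2)
  have hδ : 0 < δ := lt_min hε one_half_pos
  have hc : (a : ℂ) ≠ 0 := Complex.ofReal_ne_zero.2 (zero_lt_one.trans ha.1).ne'
  obtain ⟨n₀, hn₀⟩ := eventually_atTop.1 <|
    (eventually_norm_add_one_div_lt hc (r := 1 - δ) (by linarith [min_le_right ε (1 / 2)])
      (by linarith) hε).and (eventually_norm_lt (a : ℂ) (R := 1 + δ) (by linarith))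
  refine ⟨n₀, fun n hn α hα => ?_⟩
  have hroot : α ^ n = a * α + 1 := by linear_combination hα
  obtain ⟨hsmall, hlarge⟩ := hn₀ n hn.le
  by_cases hα : ‖α‖ ≤ 1 - δ
  · exact .inl (hsmall α hroot hα)
  · have : δ ≤ ε := min_le_left ε (1 / 2)
    exact .inr ⟨by linarith, by linarith [hlarge α hroot]⟩
end

section
/- Let a ∈ (0,2) and n sufficiently large. If α₁ = ρ₁ e^{iφ₁} and α₂ = ρ₂ e^{iφ₂} are roots of x^n - a x - 1 with 0 ≤ φ₁ < φ₂ < π, then ρ₁ > ρ₂; i.e., the modulus of a root is a strictly decreasing function of its argument on [0, π). -/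
/-!
Squaring moduli in `z ^ n = a z + 1` with `z = ρ e^{iφ}` gives `ρ^(2n-1) - a²ρ - ρ⁻¹ = 2a cos φ`.
As `cos` is strictly decreasing on `[0, π)`, it suffices that the left side is nondecreasing in `ρ`
from the smaller root modulus on. Its derivative `(2n-1)ρ^(2n-2) - a² + ρ⁻²` is nonnegative
everywhere when `a ≤ 1`. For `1 < a`, a root off the ray `(-∞, 0]` has `ρ > (a+1)/(2a)` for large
`n`: a positive root has `ρ > 1`, and otherwise `z ≠ z̄` are both roots, so `a (z - z̄) = z^n - z̄^n`
forces `a ≤ n ρ^(n-1)`. Then `ρ^(n-1) ≥ min(1, aρ - 1) ≥ (a-1)/2`, and the derivative is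
nonnegative beyond `ρ` as soon as `(2n-1)(a-1)²/4 ≥ 4`.
-/

open Complex ComplexConjugate Filter Set Topology
open scoped Real

lemma norm_pow_sub_pow_le {𝕜 : Type*} [NormedField 𝕜] (x y : 𝕜) (n : ℕ) :
    ‖x ^ n - y ^ n‖ ≤ n * max ‖x‖ ‖y‖ ^ (n - 1) * ‖x - y‖ := by
  rw [← geom_sum₂_mul, norm_mul]
  gcongr
  calc ‖∑ i ∈ Finset.range n, x ^ i * y ^ (n - 1 - i)‖
      ≤ ∑ i ∈ Finset.range n, ‖x ^ i * y ^ (n - 1 - i)‖ := norm_sum_le _ _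
    _ ≤ ∑ _i ∈ Finset.range n, max ‖x‖ ‖y‖ ^ (n - 1) := by
        refine Finset.sum_le_sum fun i hi => ?_
        rw [norm_mul, norm_pow, norm_pow,
          ← pow_mul_pow_sub _ (Nat.le_sub_one_of_lt (Finset.mem_range.1 hi))]
        gcongr
        exacts [le_max_left _ _, le_max_right _ _]
    _ = n * max ‖x‖ ‖y‖ ^ (n - 1) := by simp

lemma pow_sub_mul_sub_inv_le_of_le {m : ℕ} {c x y : ℝ} (hx : 0 < x) (hxy : x ≤ y)
    (hc : ∀ t ∈ Icc x y, c ≤ m * t ^ (m - 1) + (t ^ 2)⁻¹) :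
    x ^ m - c * x - x⁻¹ ≤ y ^ m - c * y - y⁻¹ := by
  have hderiv : ∀ t ∈ Icc x y, HasDerivAt (fun t => t ^ m - c * t - t⁻¹)
      (m * t ^ (m - 1) - c + (t ^ 2)⁻¹) t := fun t ht =>
    (((hasDerivAt_pow m t).sub ((hasDerivAt_id t).const_mul c)).sub
      (hasDerivAt_inv (hx.trans_le ht.1).ne')).congr_deriv (by ring)
  refine monotoneOn_of_hasDerivWithinAt_nonneg (convex_Icc x y)
    (fun t ht => (hderiv t ht).continuousAt.continuousWithinAt)
    (fun t ht => (hderiv t (interior_subset ht)).hasDerivWithinAt)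
    (fun t ht => by linarith [hc t (interior_subset ht)])
    ⟨le_rfl, hxy⟩ ⟨hxy, le_rfl⟩ hxy

section Trinomial

variable {a : ℝ} {z : ℂ} {n k : ℕ}

lemma sq_norm_ofReal_mul_add_one (a : ℝ) (z : ℂ) :
    ‖(a : ℂ) * z + 1‖ ^ 2 = a ^ 2 * ‖z‖ ^ 2 + 2 * a * z.re + 1 := by
  rw [← normSq_eq_norm_sq, ← normSq_eq_norm_sq, normSq_apply, normSq_apply]
  simp only [add_re, add_im, re_ofReal_mul, im_ofReal_mul, one_re, one_im]
  ring

lemma norm_pow_two_mul_of_root (hz : z ^ n = a * z + 1) :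
    ‖z‖ ^ (2 * n) = a ^ 2 * ‖z‖ ^ 2 + 2 * a * z.re + 1 := by
  rw [pow_mul', ← norm_pow, hz, sq_norm_ofReal_mul_add_one]

lemma le_norm_pow_of_root_of_im_ne_zero (hz : z ^ n = a * z + 1) (him : z.im ≠ 0) :
    a ≤ n * ‖z‖ ^ (n - 1) := by
  have hconj : (conj z) ^ n = a * conj z + 1 := by
    simpa using congrArg conj hz
  have hne : 0 < ‖z - conj z‖ := by
    rw [norm_pos_iff, sub_conj]
    simp [him]
  have h := norm_pow_sub_pow_le z (conj z) n
  rw [hz, hconj, norm_conj, max_self, add_sub_add_right_eq_sub, ← mul_sub, norm_mul,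
    norm_real, Real.norm_eq_abs] at h
  exact (le_abs_self a).trans (le_of_mul_le_mul_right h hne)

lemma one_lt_norm_of_root_of_re_pos (ha : 0 < a) (hz : z ^ n = a * z + 1) (hre : 0 < z.re) :
    1 < ‖z‖ := by
  by_contra! h
  have h1 : ‖z‖ ^ (2 * n) ≤ 1 := pow_le_one₀ (norm_nonneg z) h
  rw [norm_pow_two_mul_of_root hz] at h1
  nlinarith [mul_pos ha hre, sq_nonneg (a * ‖z‖)]

lemma lt_norm_of_root_mem_slitPlane {r : ℝ} (ha : 0 < a) (hr : r < 1)
    (hn : n * r ^ (n - 1) < a) (hz : z ^ n = a * z + 1) (hslit : z ∈ slitPlane) : r < ‖z‖ := by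
  rcases mem_slitPlane_iff.1 hslit with hre | him
  · exact hr.trans (one_lt_norm_of_root_of_re_pos ha hz hre)
  · by_contra! h
    have : (n : ℝ) * ‖z‖ ^ (n - 1) ≤ n * r ^ (n - 1) := by gcongr
    linarith [le_norm_pow_of_root_of_im_ne_zero hz him]

lemma min_le_norm_pow_of_root (hz : z ^ (k + 1) = a * z + 1) :
    min 1 (a * ‖z‖ - 1) ≤ ‖z‖ ^ k := by
  rcases le_total 1 ‖z‖ with h | h
  · exact (min_le_left _ _).trans (one_le_pow₀ h)
  · refine (min_le_right _ _).trans ?_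
    calc a * ‖z‖ - 1 ≤ ‖(a : ℂ) * z‖ - ‖(1 : ℂ)‖ := by
          rw [norm_mul, norm_real, norm_one, Real.norm_eq_abs]
          gcongr
          exact le_abs_self a
      _ ≤ ‖(a : ℂ) * z + 1‖ := norm_sub_le_norm_add _ _
      _ = ‖z‖ ^ (k + 1) := by rw [← norm_pow, hz]
      _ ≤ ‖z‖ ^ k := pow_le_pow_of_le_one (norm_nonneg _) h k.le_succ

lemma le_mul_pow_add_inv_sq_of_le_one {c t : ℝ} (hc : c ≤ 1) (ht : 0 < t) :
    c ≤ (2 * k + 1) * t ^ (2 * k) + (t ^ 2)⁻¹ := by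
  rcases le_total 1 t with h | h
  · have : 1 ≤ (2 * k + 1) * t ^ (2 * k) :=
      one_le_mul_of_one_le_of_one_le (by linarith [k.cast_nonneg (α := ℝ)]) (one_le_pow₀ h)
    linarith [inv_nonneg.2 (sq_nonneg t)]
  · have : 1 ≤ (t ^ 2)⁻¹ := one_le_inv₀ (by positivity) |>.2 (pow_le_one₀ ht.le h)
    linarith [mul_nonneg (by positivity : (0 : ℝ) ≤ 2 * k + 1) (pow_nonneg ht.le (2 * k))]

lemma sq_le_mul_pow_add_inv_sq_of_root {t : ℝ} (ha : 1 < a) (ha2 : a < 2)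
    (hk : 4 ≤ (2 * k + 1) * ((a - 1) / 2) ^ 2)
    (hz : z ^ (k + 1) = a * z + 1) (hr : (a + 1) / (2 * a) < ‖z‖) (ht : ‖z‖ ≤ t) :
    a ^ 2 ≤ (2 * k + 1) * t ^ (2 * k) + (t ^ 2)⁻¹ := by
  have hmul : a + 1 < 2 * a * ‖z‖ := (div_lt_iff₀ (by positivity)).1 hr |>.trans_eq (mul_comm _ _)
  have hδ : (a - 1) / 2 ≤ ‖z‖ ^ k :=
    (le_min (by linarith) (by linarith)).trans (min_le_norm_pow_of_root hz)
  calc a ^ 2 ≤ (2 * k + 1) * ((a - 1) / 2) ^ 2 := by nlinarith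
    _ ≤ (2 * k + 1) * t ^ (2 * k) := by
        rw [pow_mul']
        gcongr
        exact hδ.trans (pow_le_pow_left₀ (norm_nonneg z) ht k)
    _ ≤ (2 * k + 1) * t ^ (2 * k) + (t ^ 2)⁻¹ := le_add_of_nonneg_right (by positivity)

lemma eventually_sq_le_of_root (ha : a ∈ Ioo 0 2) :
    ∀ᶠ k : ℕ in atTop, ∀ z : ℂ, z ∈ slitPlane → z ^ (k + 1) = a * z + 1 →
      ∀ t, ‖z‖ ≤ t → a ^ 2 ≤ (2 * k + 1) * t ^ (2 * k) + (t ^ 2)⁻¹ := by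
  obtain ⟨ha0, ha2⟩ := ha
  rcases le_or_gt a 1 with ha1 | ha1
  · exact .of_forall fun k z hslit _ t ht => le_mul_pow_add_inv_sq_of_le_one (by nlinarith)
      ((norm_pos_iff.2 (slitPlane_ne_zero hslit)).trans_le ht)
  set r := (a + 1) / (2 * a)
  have hr0 : 0 ≤ r := by positivity
  have hr1 : r < 1 := by rw [div_lt_one (by positivity)]; linarith
  have hsmall : ∀ᶠ k : ℕ in atTop, ((k + 1 : ℕ) : ℝ) * r ^ k < a := by
    have : Tendsto (fun k : ℕ => ((k + 1 : ℕ) : ℝ) * r ^ k) atTop (𝓝 0) := by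
      simpa [add_mul] using (tendsto_self_mul_const_pow_of_lt_one hr0 hr1).add
        (tendsto_pow_atTop_nhds_zero_of_lt_one hr0 hr1)
    exact this.eventually (gt_mem_nhds ha0)
  have hlarge : ∀ᶠ k : ℕ in atTop, 4 ≤ (2 * k + 1) * ((a - 1) / 2) ^ 2 := by
    have : Tendsto (fun k : ℕ => (2 * k + 1) * ((a - 1) / 2) ^ 2) atTop atTop := by
      refine Tendsto.atTop_mul_const (by nlinarith) (tendsto_atTop_add_const_right _ _ ?_)
      exact tendsto_natCast_atTop_atTop.const_mul_atTop two_pos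
    exact this.eventually_ge_atTop 4
  filter_upwards [hsmall, hlarge] with k hk hk' z hslit hz t ht
  exact sq_le_mul_pow_add_inv_sq_of_root ha1 ha2 hk' hz
    (lt_norm_of_root_mem_slitPlane ha0 hr1 (by simpa using hk) hz hslit) ht

end Trinomial

section Polar

variable {ρ φ : ℝ}

lemma norm_ofReal_mul_exp_mul_I (hρ : 0 < ρ) : ‖(ρ : ℂ) * exp (φ * I)‖ = ρ := by
  simp [hρ.le]

lemma ofReal_mul_exp_mul_I_mem_slitPlane (hρ : 0 < ρ) (hφ₀ : 0 ≤ φ) (hφπ : φ < π) :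
    (ρ : ℂ) * exp (φ * I) ∈ slitPlane := by
  rcases hφ₀.eq_or_lt with rfl | hφ₀
  · simp [hρ]
  · refine mem_slitPlane_iff.2 (Or.inr ?_)
    simpa [exp_ofReal_mul_I_im] using ⟨hρ.ne', (Real.sin_pos_of_pos_of_lt_pi hφ₀ hφπ).ne'⟩

lemma pow_sub_mul_sub_inv_eq_cos {a : ℝ} {k : ℕ} (hρ : 0 < ρ)
    (h : ((ρ : ℂ) * exp (φ * I)) ^ (k + 1) = a * ((ρ : ℂ) * exp (φ * I)) + 1) :
    ρ ^ (2 * k + 1) - a ^ 2 * ρ - ρ⁻¹ = 2 * a * Real.cos φ := by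
  have h2 := norm_pow_two_mul_of_root h
  rw [norm_ofReal_mul_exp_mul_I hρ, re_ofReal_mul, exp_ofReal_mul_I_re] at h2
  field_simp
  linear_combination h2

end Polar

theorem modulus_decreasing_in_argument (a : ℝ) (ha : a ∈ Set.Ioo (0 : ℝ) 2) :
    ∃ n₀ : ℕ, ∀ n : ℕ, n₀ < n →
      ∀ ρ₁ ρ₂ φ₁ φ₂ : ℝ, 0 < ρ₁ → 0 < ρ₂ →
        ((ρ₁ : ℂ) * Complex.exp (φ₁ * Complex.I)) ^ n
          - (a : ℂ) * ((ρ₁ : ℂ) * Complex.exp (φ₁ * Complex.I)) - 1 = 0 →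
        ((ρ₂ : ℂ) * Complex.exp (φ₂ * Complex.I)) ^ n
          - (a : ℂ) * ((ρ₂ : ℂ) * Complex.exp (φ₂ * Complex.I)) - 1 = 0 →
        0 ≤ φ₁ → φ₁ < φ₂ → φ₂ < Real.pi → ρ₂ < ρ₁ := by
  obtain ⟨k₀, hk₀⟩ := eventually_atTop.1 (eventually_sq_le_of_root ha)
  refine ⟨k₀ + 1, fun n hn ρ₁ ρ₂ φ₁ φ₂ hρ₁ hρ₂ h₁ h₂ hφ₁ hφ₁₂ hφ₂ => ?_⟩
  obtain ⟨k, rfl⟩ : ∃ k, n = k + 1 := ⟨n - 1, by omega⟩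
  rw [sub_sub, sub_eq_zero] at h₁ h₂
  by_contra! hle
  have hslit := ofReal_mul_exp_mul_I_mem_slitPlane hρ₁ hφ₁ (hφ₁₂.trans hφ₂)
  have hmono := pow_sub_mul_sub_inv_le_of_le (m := 2 * k + 1) (c := a ^ 2) hρ₁ hle fun t ht => by
    simpa using hk₀ k (by omega) _ hslit h₁ t ((norm_ofReal_mul_exp_mul_I hρ₁).trans_le ht.1)
  rw [pow_sub_mul_sub_inv_eq_cos hρ₁ h₁, pow_sub_mul_sub_inv_eq_cos hρ₂ h₂] at hmono
  have hcos := Real.cos_lt_cos_of_nonneg_of_le_pi hφ₁ hφ₂.le hφ₁₂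
  nlinarith [ha.1]
end
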